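/- Let f : ℕ → ℝ satisfy |f(k+1) − f(k)| ≤ κ for all k ∈ ℕ (f is Lipschitz with constant κ). Then for all λ_1, λ_2 with 0 ≤ λ_1 ≤ λ_2 < λ_c, the means Σ_k f(k) Θ_{λ_1}({k}) and Σ_k f(k) Θ_{λ_2}({k}) are absolutely convergent and |Σ_k f(k) Θ_{λ_2}({k}) − Σ_k f(k) Θ_{λ_1}({k})| ≤ κ · (ρ(λ_2) − ρ(λ_1)). In particular, the functions Φ(ρ) = E_{Θ_{λ(ρ)}}[g] and Ψ(ρ) = E_{Θ_{λ(ρ)}}[h] are Lipschitz in the density ρ whenever g and h are Lipschitz. -/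

import Mathlib

/-!
Write `P₁ k = a_k λ₁^k` and `P₂ k = a_k λ₂^k`. Since `λ₁ ≤ λ₂`, the ratio `P₂ k / P₁ k` is
nondecreasing, so `(i - j) (P₂ i P₁ j - P₁ i P₂ j) ≥ 0` for all `i, j`. Symmetrizing,
`Z₁ Z₂ (E₂ f - E₁ f)` is half the double sum of `(f i - f j) (P₂ i P₁ j - P₁ i P₂ j)`, and as
`|f i - f j| ≤ κ |i - j|`, each of its terms is bounded by `κ` times the corresponding term for
`f = id`, whose double sum is `2 Z₁ Z₂ (ρ₂ - ρ₁)`. All series converge absolutely by the ratio test: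
below `λ_c` the ratio of consecutive weights is eventually at most `λ / c < 1`.
-/

open scoped BigOperators

/-- The coefficients `a_k = (∏_{j=0}^{k-1} h(j)) / (∏_{j=1}^{k} g(j))`, with `a_0 = 1`. -/
noncomputable def coefA (g h : ℕ → ℝ) (k : ℕ) : ℝ :=
  (∏ j ∈ Finset.range k, h j) / ∏ j ∈ Finset.range k, g (j + 1)

/-- The partition function `Z(λ) = Σ_{k ≥ 0} a_k λ^k`. -/
noncomputable def partZ (g h : ℕ → ℝ) (lam : ℝ) : ℝ :=
  ∑' k : ℕ, coefA g h k * lam ^ k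

/-- The critical value `λ_c = liminf_{k → ∞} g(k+1)/h(k)` (as an extended real). -/
noncomputable def lamCrit (g h : ℕ → ℝ) : EReal :=
  Filter.liminf (fun k : ℕ => ((g (k + 1) / h k : ℝ) : EReal)) Filter.atTop

/-- The probability mass function `Θ_λ({k}) = a_k λ^k / Z(λ)`. -/
noncomputable def thetaPMF (g h : ℕ → ℝ) (lam : ℝ) (k : ℕ) : ℝ :=
  coefA g h k * lam ^ k / partZ g h lam

open Filter

section Lipschitz

variable {f : ℕ → ℝ} {κ : ℝ}

theorem abs_sub_le_mul_abs_sub_of_abs_succ_sub_le (hf : ∀ k, |f (k + 1) - f k| ≤ κ) (i j : ℕ) :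
    |f j - f i| ≤ κ * |(j : ℝ) - i| := by
  wlog hij : i ≤ j generalizing i j
  · rw [abs_sub_comm, abs_sub_comm (j : ℝ)]
    exact this j i (le_of_not_ge hij)
  have := dist_le_Ico_sum_of_dist_le (d := fun _ => κ) (f := f) hij fun {k} _ _ => by
    rw [dist_comm]; exact hf k
  rw [Real.dist_eq, abs_sub_comm] at this
  rwa [Finset.sum_const, Nat.card_Ico, nsmul_eq_mul, Nat.cast_sub hij, mul_comm,
    ← abs_of_nonneg (sub_nonneg.2 (Nat.cast_le.2 hij) : (0 : ℝ) ≤ j - i)] at this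

theorem abs_le_mul_succ_of_abs_succ_sub_le (hf : ∀ k, |f (k + 1) - f k| ≤ κ) (k : ℕ) :
    |f k| ≤ (|f 0| + κ) * ((k : ℝ) + 1) := by
  have hκ : 0 ≤ κ := (abs_nonneg _).trans (hf 0)
  have hk := abs_sub_le_mul_abs_sub_of_abs_succ_sub_le hf 0 k
  rw [Nat.cast_zero, sub_zero, Nat.abs_cast] at hk
  have := abs_sub_abs_le_abs_sub (f k) (f 0)
  nlinarith [abs_nonneg (f 0), (Nat.cast_nonneg k : (0 : ℝ) ≤ k)]

end Lipschitz

theorem summable_succ_mul_of_ratio_le {u : ℕ → ℝ} {r : ℝ} (hu : ∀ k, 0 ≤ u k) (hr : r < 1)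
    (h : ∀ᶠ k in atTop, u (k + 1) ≤ r * u k) : Summable fun k : ℕ => ((k : ℝ) + 1) * u k := by
  obtain ⟨s, hrs, hs⟩ := exists_between hr
  -- the factor `(k + 2) / (k + 1)` is eventually absorbed by raising the ratio from `r` to `s`
  have hlarge : ∀ᶠ k : ℕ in atTop, (2 * r - s) / (s - r) ≤ k :=
    tendsto_natCast_atTop_atTop.eventually_ge_atTop _
  refine summable_of_ratio_norm_eventually_le hs ?_
  filter_upwards [h, hlarge] with k hk hk'
  rw [div_le_iff₀ (sub_pos.2 hrs)] at hk'
  have hk0 := hu k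
  rw [Real.norm_of_nonneg (mul_nonneg (by positivity) (hu _)),
    Real.norm_of_nonneg (mul_nonneg (by positivity) hk0)]
  push_cast
  nlinarith

theorem summable_abs_mul_of_abs_le_mul_succ {p φ : ℕ → ℝ} {C : ℝ} (hp0 : ∀ k, 0 ≤ p k)
    (hp : Summable fun k : ℕ => ((k : ℝ) + 1) * p k) (hφ : ∀ k, |φ k| ≤ C * ((k : ℝ) + 1)) :
    Summable fun k => |φ k * p k| := by
  refine (hp.mul_left C).of_nonneg_of_le (fun k => abs_nonneg _) fun k => ?_
  rw [abs_mul, abs_of_nonneg (hp0 k), ← mul_assoc]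
  exact mul_le_mul_of_nonneg_right (hφ k) (hp0 k)

theorem hasSum_mul_of_summable_norm {p q : ℕ → ℝ} (hp : Summable fun k => ‖p k‖)
    (hq : Summable fun k => ‖q k‖) :
    HasSum (fun z : ℕ × ℕ => p z.1 * q z.2) ((∑' k, p k) * ∑' k, q k) :=
  hp.of_norm.hasSum.mul hq.of_norm.hasSum (summable_mul_of_summable_norm hp hq)

theorem hasSum_sub_mul_cross {p q φ : ℕ → ℝ} (hp : Summable fun k => ‖p k‖)
    (hq : Summable fun k => ‖q k‖) (hφp : Summable fun k => ‖φ k * p k‖)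
    (hφq : Summable fun k => ‖φ k * q k‖) :
    HasSum (fun z : ℕ × ℕ => (φ z.1 - φ z.2) * (q z.1 * p z.2 - p z.1 * q z.2))
      (2 * ((∑' k, φ k * q k) * (∑' k, p k) - (∑' k, φ k * p k) * ∑' k, q k)) := by
  have h := ((hasSum_mul_of_summable_norm hφq hp).sub (hasSum_mul_of_summable_norm hφp hq)).sub
    ((hasSum_mul_of_summable_norm hq hφp).sub (hasSum_mul_of_summable_norm hp hφq))
  rw [show ∀ a b c d : ℝ, 2 * (a * b - c * d) = a * b - c * d - (d * c - b * a) by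
    intros; ring]
  exact h.congr_fun fun z => by ring

/-- `p` precedes `q` in the likelihood ratio order: `k ↦ q k / p k` is monotone, stated without
division. -/
def LikelihoodRatioLE (p q : ℕ → ℝ) : Prop :=
  ∀ ⦃i j : ℕ⦄, i ≤ j → q i * p j ≤ q j * p i

namespace LikelihoodRatioLE

variable {p q : ℕ → ℝ}

theorem div_const (hpq : LikelihoodRatioLE p q) {a b : ℝ} (ha : 0 ≤ a) (hb : 0 ≤ b) :
    LikelihoodRatioLE (fun k => p k / a) (fun k => q k / b) := fun i j hij => by
  simp only [div_mul_div_comm]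
  exact div_le_div_of_nonneg_right (hpq hij) (mul_nonneg hb ha)

theorem sub_mul_cross_nonneg (hpq : LikelihoodRatioLE p q) (i j : ℕ) :
    0 ≤ ((i : ℝ) - j) * (q i * p j - p i * q j) := by
  rcases le_total i j with hij | hji
  · refine mul_nonneg_of_nonpos_of_nonpos (sub_nonpos.2 (Nat.cast_le.2 hij)) ?_
    linarith [hpq hij]
  · refine mul_nonneg (sub_nonneg.2 (Nat.cast_le.2 hji)) ?_
    linarith [hpq hji]

theorem abs_tsum_mul_sub_le (hpq : LikelihoodRatioLE p q) (hp0 : ∀ k, 0 ≤ p k)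
    (hq0 : ∀ k, 0 ≤ q k) (hp : Summable fun k : ℕ => ((k : ℝ) + 1) * p k)
    (hq : Summable fun k : ℕ => ((k : ℝ) + 1) * q k) {f : ℕ → ℝ} {κ : ℝ}
    (hf : ∀ k, |f (k + 1) - f k| ≤ κ) :
    |(∑' k, f k * q k) * (∑' k, p k) - (∑' k, f k * p k) * ∑' k, q k|
      ≤ κ * ((∑' k : ℕ, (k : ℝ) * q k) * (∑' k, p k) - (∑' k : ℕ, (k : ℝ) * p k) * ∑' k, q k) := by
  have hf' := abs_le_mul_succ_of_abs_succ_sub_le hf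
  have hid : ∀ k : ℕ, |(k : ℝ)| ≤ 1 * ((k : ℝ) + 1) := fun k => by simp
  have hone : ∀ k : ℕ, |(1 : ℝ)| ≤ 1 * ((k : ℝ) + 1) := fun k => by simp
  have hp' : Summable fun k => ‖p k‖ := by
    simpa using summable_abs_mul_of_abs_le_mul_succ hp0 hp hone
  have hq' : Summable fun k => ‖q k‖ := by
    simpa using summable_abs_mul_of_abs_le_mul_succ hq0 hq hone
  have hfsum := hasSum_sub_mul_cross hp' hq' (summable_abs_mul_of_abs_le_mul_succ hp0 hp hf')
    (summable_abs_mul_of_abs_le_mul_succ hq0 hq hf')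
  have hidsum := hasSum_sub_mul_cross hp' hq' (summable_abs_mul_of_abs_le_mul_succ hp0 hp hid)
    (summable_abs_mul_of_abs_le_mul_succ hq0 hq hid)
  have hdouble := hfsum.norm_le_of_bounded (hidsum.mul_left κ) fun z => by
    rw [Real.norm_eq_abs, abs_mul]
    calc |f z.1 - f z.2| * |q z.1 * p z.2 - p z.1 * q z.2|
        ≤ κ * |(z.1 : ℝ) - z.2| * |q z.1 * p z.2 - p z.1 * q z.2| :=
          mul_le_mul_of_nonneg_right (abs_sub_le_mul_abs_sub_of_abs_succ_sub_le hf _ _)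
            (abs_nonneg _)
      _ = κ * (((z.1 : ℝ) - z.2) * (q z.1 * p z.2 - p z.1 * q z.2)) := by
          rw [mul_assoc, ← abs_mul, abs_of_nonneg (hpq.sub_mul_cross_nonneg _ _)]
  rw [Real.norm_eq_abs, abs_mul, abs_two] at hdouble
  linarith

end LikelihoodRatioLE

theorem likelihoodRatioLE_mul_pow {a : ℕ → ℝ} (ha : ∀ k, 0 ≤ a k) {lam₁ lam₂ : ℝ}
    (h₁ : 0 ≤ lam₁) (h₁₂ : lam₁ ≤ lam₂) :
    LikelihoodRatioLE (fun k => a k * lam₁ ^ k) (fun k => a k * lam₂ ^ k) := by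
  intro i j hij
  obtain ⟨d, rfl⟩ := Nat.exists_eq_add_of_le hij
  have hc : 0 ≤ a i * a (i + d) * (lam₁ * lam₂) ^ i :=
    mul_nonneg (mul_nonneg (ha i) (ha _)) (pow_nonneg (mul_nonneg h₁ (h₁.trans h₁₂)) i)
  calc a i * lam₂ ^ i * (a (i + d) * lam₁ ^ (i + d))
      = a i * a (i + d) * (lam₁ * lam₂) ^ i * lam₁ ^ d := by ring
    _ ≤ a i * a (i + d) * (lam₁ * lam₂) ^ i * lam₂ ^ d :=
      mul_le_mul_of_nonneg_left (pow_le_pow_left₀ h₁ h₁₂ d) hc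
    _ = a (i + d) * lam₂ ^ (i + d) * (a i * lam₁ ^ i) := by ring

section Weights

variable {g h : ℕ → ℝ}

theorem coefA_pos (hg : ∀ k, 1 ≤ k → 0 < g k) (hh : ∀ k, 0 < h k) (k : ℕ) : 0 < coefA g h k :=
  div_pos (Finset.prod_pos fun j _ => hh j) (Finset.prod_pos fun j _ => hg (j + 1) j.succ_pos)

theorem coefA_succ (k : ℕ) : coefA g h (k + 1) = coefA g h k * (h k / g (k + 1)) := by
  simp only [coefA, Finset.prod_range_succ]
  ring

theorem exists_lt_eventually_lt_of_lt_lamCrit {lam : ℝ} (hlam : (lam : EReal) < lamCrit g h) :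
    ∃ c, lam < c ∧ ∀ᶠ k in atTop, c < g (k + 1) / h k := by
  obtain ⟨c, hlc, hc⟩ := EReal.exists_between_coe_real hlam
  refine ⟨c, EReal.coe_lt_coe_iff.1 hlc, ?_⟩
  filter_upwards [eventually_lt_of_lt_liminf hc] with k hk
  exact EReal.coe_lt_coe_iff.1 hk

theorem summable_succ_mul_coefA_mul_pow (hg : ∀ k, 1 ≤ k → 0 < g k) (hh : ∀ k, 0 < h k)
    {lam : ℝ} (h0 : 0 ≤ lam) (hlam : (lam : EReal) < lamCrit g h) :
    Summable fun k : ℕ => ((k : ℝ) + 1) * (coefA g h k * lam ^ k) := by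
  obtain ⟨c, hlc, hc⟩ := exists_lt_eventually_lt_of_lt_lamCrit hlam
  have hc0 : 0 < c := h0.trans_lt hlc
  have hw : ∀ k, 0 ≤ coefA g h k * lam ^ k := fun k =>
    mul_nonneg (coefA_pos hg hh k).le (pow_nonneg h0 k)
  refine summable_succ_mul_of_ratio_le hw ((div_lt_one hc0).2 hlc) ?_
  filter_upwards [hc] with k hk
  have hratio : h k / g (k + 1) ≤ c⁻¹ := by
    rw [← inv_div]
    exact inv_anti₀ hc0 hk.le
  calc coefA g h (k + 1) * lam ^ (k + 1)
      = coefA g h k * lam ^ k * lam * (h k / g (k + 1)) := by rw [coefA_succ, pow_succ]; ring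
    _ ≤ coefA g h k * lam ^ k * lam * c⁻¹ :=
      mul_le_mul_of_nonneg_left hratio (mul_nonneg (hw k) h0)
    _ = lam / c * (coefA g h k * lam ^ k) := by ring

theorem one_le_partZ (hg : ∀ k, 1 ≤ k → 0 < g k) (hh : ∀ k, 0 < h k) {lam : ℝ} (h0 : 0 ≤ lam)
    (hlam : (lam : EReal) < lamCrit g h) : 1 ≤ partZ g h lam := by
  have hw : ∀ k, 0 ≤ coefA g h k * lam ^ k := fun k =>
    mul_nonneg (coefA_pos hg hh k).le (pow_nonneg h0 k)
  have hS := (summable_succ_mul_coefA_mul_pow hg hh h0 hlam).of_nonneg_of_le hw fun k =>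
    le_mul_of_one_le_left (hw k) (by simp)
  have h0term : coefA g h 0 * lam ^ 0 = 1 := by simp [coefA]
  exact h0term ▸ hS.le_tsum 0 fun k _ => hw k

theorem thetaPMF_nonneg (hg : ∀ k, 1 ≤ k → 0 < g k) (hh : ∀ k, 0 < h k) {lam : ℝ}
    (h0 : 0 ≤ lam) (hlam : (lam : EReal) < lamCrit g h) (k : ℕ) : 0 ≤ thetaPMF g h lam k :=
  div_nonneg (mul_nonneg (coefA_pos hg hh k).le (pow_nonneg h0 k))
    (zero_le_one.trans (one_le_partZ hg hh h0 hlam))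

theorem tsum_thetaPMF (hg : ∀ k, 1 ≤ k → 0 < g k) (hh : ∀ k, 0 < h k) {lam : ℝ}
    (h0 : 0 ≤ lam) (hlam : (lam : EReal) < lamCrit g h) : ∑' k, thetaPMF g h lam k = 1 := by
  simp only [thetaPMF]
  rw [tsum_div_const]
  exact div_self (zero_lt_one.trans_le (one_le_partZ hg hh h0 hlam)).ne'

theorem summable_succ_mul_thetaPMF (hg : ∀ k, 1 ≤ k → 0 < g k) (hh : ∀ k, 0 < h k) {lam : ℝ}
    (h0 : 0 ≤ lam) (hlam : (lam : EReal) < lamCrit g h) :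
    Summable fun k : ℕ => ((k : ℝ) + 1) * thetaPMF g h lam k :=
  ((summable_succ_mul_coefA_mul_pow hg hh h0 hlam).div_const _).congr fun _ =>
    mul_div_assoc _ _ _

theorem likelihoodRatioLE_thetaPMF (hg : ∀ k, 1 ≤ k → 0 < g k) (hh : ∀ k, 0 < h k)
    {lam₁ lam₂ : ℝ} (h₁ : 0 ≤ lam₁) (h₁₂ : lam₁ ≤ lam₂) (h₂c : (lam₂ : EReal) < lamCrit g h) :
    LikelihoodRatioLE (thetaPMF g h lam₁) (thetaPMF g h lam₂) :=
  (likelihoodRatioLE_mul_pow (fun k => (coefA_pos hg hh k).le) h₁ h₁₂).div_const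
    (zero_le_one.trans (one_le_partZ hg hh h₁ ((EReal.coe_le_coe_iff.2 h₁₂).trans_lt h₂c)))
    (zero_le_one.trans (one_le_partZ hg hh (h₁.trans h₁₂) h₂c))

end Weights

theorem lipschitz_mean_estimate_general
    (g h : ℕ → ℝ) (hg : ∀ k : ℕ, 1 ≤ k → 0 < g k) (hh : ∀ k : ℕ, 0 < h k)
    (f : ℕ → ℝ) (κ : ℝ) (hf : ∀ k : ℕ, |f (k + 1) - f k| ≤ κ)
    (lam₁ lam₂ : ℝ) (h₁ : 0 ≤ lam₁) (h₁₂ : lam₁ ≤ lam₂)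
    (h₂c : (lam₂ : EReal) < lamCrit g h) :
    Summable (fun k : ℕ => |f k * thetaPMF g h lam₁ k|)
    ∧ Summable (fun k : ℕ => |f k * thetaPMF g h lam₂ k|)
    ∧ |(∑' k : ℕ, f k * thetaPMF g h lam₂ k) - ∑' k : ℕ, f k * thetaPMF g h lam₁ k|
        ≤ κ * ((∑' k : ℕ, (k : ℝ) * thetaPMF g h lam₂ k)
                - ∑' k : ℕ, (k : ℝ) * thetaPMF g h lam₁ k) := by
  have h₂ : 0 ≤ lam₂ := h₁.trans h₁₂
  have h₁c : (lam₁ : EReal) < lamCrit g h := (EReal.coe_le_coe_iff.2 h₁₂).trans_lt h₂c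
  have hθ₁ := thetaPMF_nonneg hg hh h₁ h₁c
  have hθ₂ := thetaPMF_nonneg hg hh h₂ h₂c
  have hS₁ := summable_succ_mul_thetaPMF hg hh h₁ h₁c
  have hS₂ := summable_succ_mul_thetaPMF hg hh h₂ h₂c
  have hfk := abs_le_mul_succ_of_abs_succ_sub_le hf
  refine ⟨summable_abs_mul_of_abs_le_mul_succ hθ₁ hS₁ hfk,
    summable_abs_mul_of_abs_le_mul_succ hθ₂ hS₂ hfk, ?_⟩
  simpa only [tsum_thetaPMF hg hh h₁ h₁c, tsum_thetaPMF hg hh h₂ h₂c, mul_one] using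
    (likelihoodRatioLE_thetaPMF hg hh h₁ h₁₂ h₂c).abs_tsum_mul_sub_le hθ₁ hθ₂ hS₁ hS₂ hf

/-- If `f : ℕ → ℝ` is Lipschitz with constant `κ`
(`|f(k+1) − f(k)| ≤ κ`), then for `0 ≤ λ₁ ≤ λ₂ < λ_c` the means
`Σ_k f(k) Θ_{λᵢ}({k})` are absolutely convergent and
`|Σ_k f(k) Θ_{λ₂}({k}) − Σ_k f(k) Θ_{λ₁}({k})| ≤ κ (ρ(λ₂) − ρ(λ₁))`. -/
theorem lipschitz_mean_estimate
    (g h : ℕ → ℝ) (hg0 : g 0 = 0) (hg : ∀ k : ℕ, 1 ≤ k → 0 < g k) (hh : ∀ k : ℕ, 0 < h k)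
    (f : ℕ → ℝ) (κ : ℝ) (hf : ∀ k : ℕ, |f (k + 1) - f k| ≤ κ)
    (lam₁ lam₂ : ℝ) (h₁ : 0 ≤ lam₁) (h₁₂ : lam₁ ≤ lam₂)
    (h₂c : (lam₂ : EReal) < lamCrit g h) :
    Summable (fun k : ℕ => |f k * thetaPMF g h lam₁ k|)
    ∧ Summable (fun k : ℕ => |f k * thetaPMF g h lam₂ k|)
    ∧ |(∑' k : ℕ, f k * thetaPMF g h lam₂ k) - ∑' k : ℕ, f k * thetaPMF g h lam₁ k|
        ≤ κ * ((∑' k : ℕ, (k : ℝ) * thetaPMF g h lam₂ k)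
                - ∑' k : ℕ, (k : ℝ) * thetaPMF g h lam₁ k) :=
  lipschitz_mean_estimate_general g h hg hh f κ hf lam₁ lam₂ h₁ h₁₂ h₂c
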